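/- Let G be a finitely generated group such that for every g in G the twisted conjugacy class [e]_g = {[x,g] : x ∈ G} is a subgroup of G. If G satisfies the descending chain condition on normal subgroups (there is no infinite strictly descending chain H₁ > H₂ > H₃ > … of normal subgroups of G), then G is nilpotent. -/

import Mathlib

/-!
Let `J = ⋃ₙ ζₙ G` be the `ω`-hypercenter. An element central modulo `J` has its commutators with
the finitely many generators in a single `ζ_c G`, so it lies in `ζ_{c+1} G ⊆ J`: the quotient
`G/J` has trivial center. Both hypotheses pass to `G/J`, and a nontrivial group satisfying them
has nontrivial center: for a minimal nontrivial normal subgroup `M` and `1 ≠ m ∈ M`, the subgroup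
`[e]_m` is normal, contained in `M` and does not contain `m`, so it is trivial and `m` is central.
Hence `J = G`, and finite generation puts the generators, hence `G`, into a single `ζ_c G`.
-/

open scoped commutatorElement

/-- The twisted conjugacy class of the identity under the inner automorphism
induced by `g`: `[e]_g = {⁅x, g⁆ : x ∈ G}`. -/
def twistedClass {G : Type*} [Group G] (g : G) : Set G :=
  {y : G | ∃ x : G, y = ⁅x, g⁆}

open Subgroup

section TwistedClass

variable {G Q : Type*} [Group G] [Group Q]

theorem commutatorElement_mem_twistedClass (x g : G) : ⁅x, g⁆ ∈ twistedClass g :=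
  ⟨x, rfl⟩

theorem twistedClass_subset_of_mem {M : Subgroup G} [M.Normal] {g : G} (hg : g ∈ M) :
    twistedClass g ⊆ M := by
  rintro _ ⟨x, rfl⟩
  rw [commutatorElement_def]
  exact M.mul_mem (Normal.conj_mem ‹_› g hg x) (M.inv_mem hg)

theorem image_twistedClass {f : G →* Q} (hf : Function.Surjective f) (g : G) :
    f '' twistedClass g = twistedClass (f g) := by
  ext y
  constructor
  · rintro ⟨_, ⟨x, rfl⟩, rfl⟩
    exact ⟨f x, map_commutatorElement f x g⟩
  · rintro ⟨q, rfl⟩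
    obtain ⟨x, rfl⟩ := hf q
    exact ⟨⁅x, g⁆, ⟨x, rfl⟩, map_commutatorElement f x g⟩

theorem exists_subgroup_coe_eq_twistedClass_of_surjective {f : G →* Q}
    (hf : Function.Surjective f) (h : ∀ g : G, ∃ H : Subgroup G, (H : Set G) = twistedClass g)
    (q : Q) : ∃ K : Subgroup Q, (K : Set Q) = twistedClass q := by
  obtain ⟨g, rfl⟩ := hf q
  obtain ⟨H, hH⟩ := h g
  exact ⟨H.map f, by rw [coe_map, hH, image_twistedClass hf]⟩

namespace Subgroup

variable {H : Subgroup G} {g : G}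

theorem commutatorElement_mem_of_coe_eq_twistedClass (hH : (H : Set G) = twistedClass g)
    (x : G) : ⁅x, g⁆ ∈ H := by
  rw [← SetLike.mem_coe, hH]
  exact commutatorElement_mem_twistedClass x g

theorem normal_of_coe_eq_twistedClass (hH : (H : Set G) = twistedClass g) : H.Normal := by
  have mem := commutatorElement_mem_of_coe_eq_twistedClass hH
  constructor
  intro z hz c
  obtain ⟨x, rfl⟩ : z ∈ twistedClass g := hH ▸ hz
  -- conjugation acts on `x ↦ ⁅x, g⁆` as a crossed homomorphism
  have hconj : c * ⁅x, g⁆ * c⁻¹ = ⁅c * x, g⁆ * ⁅c, g⁆⁻¹ := by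
    simp only [commutatorElement_def]; group
  rw [hconj]
  exact H.mul_mem (mem _) (H.inv_mem (mem c))

theorem eq_one_of_mem_of_coe_eq_twistedClass (hH : (H : Set G) = twistedClass g)
    (hg : g ∈ H) : g = 1 := by
  obtain ⟨y, hy⟩ : g⁻¹ ∈ twistedClass g := hH ▸ H.inv_mem hg
  have hconj : y * g * y⁻¹ = 1 := by
    rw [commutatorElement_def, eq_mul_inv_iff_mul_eq, inv_mul_cancel] at hy
    exact hy.symm
  simpa using hconj

end Subgroup

end TwistedClass

def MinN (G : Type*) [Group G] : Prop :=
  {N : Subgroup G | N.Normal}.WellFoundedOn (· < ·)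

section MinN

variable {G Q : Type*} [Group G] [Group Q]

theorem minN_of_not_exists_strictAnti
    (h : ¬∃ f : ℕ → Subgroup G, (∀ i, (f i).Normal) ∧ ∀ i, f (i + 1) < f i) :
    MinN G := by
  rw [MinN, Set.wellFoundedOn_iff_no_descending_seq]
  exact fun f hf => h ⟨f, hf, fun i => f.map_rel_iff.2 i.lt_succ_self⟩

theorem MinN.of_surjective {f : G →* Q} (hf : Function.Surjective f) (hmin : MinN G) :
    MinN Q :=
  (hmin.mapsTo (comap f) fun _ hN => hN.comap f).mono' fun _ _ _ _ hlt =>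
    (comap_lt_comap_of_surjective hf).2 hlt

theorem MinN.center_ne_bot [Nontrivial G] (hmin : MinN G)
    (h : ∀ g : G, ∃ H : Subgroup G, (H : Set G) = twistedClass g) : center G ≠ ⊥ := by
  obtain ⟨M, ⟨hMnormal, hMbot⟩, hMmin⟩ :=
    (hmin.subset fun N (hN : N.Normal ∧ N ≠ ⊥) => hN.1).exists_minimal
      ⟨⊤, inferInstance, top_ne_bot⟩
  obtain ⟨⟨m, hmM⟩, hm1⟩ := ne_bot_iff_exists_ne_one.1 hMbot
  replace hm1 : m ≠ 1 := fun h => hm1 (Subtype.ext h)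
  obtain ⟨H, hH⟩ := h m
  have hHM : H ≤ M := fun z hz => twistedClass_subset_of_mem hmM (hH ▸ hz)
  -- `H` is a normal subgroup of `M` missing `m`, so minimality of `M` leaves only `H = ⊥`
  have hHbot : H = ⊥ := by
    by_contra hne
    exact hm1 (eq_one_of_mem_of_coe_eq_twistedClass hH
      (hMmin ⟨normal_of_coe_eq_twistedClass hH, hne⟩ hHM hmM))
  refine ne_bot_iff_exists_ne_one.2 ⟨⟨m, mem_center_iff.2 fun x => ?_⟩, ?_⟩
  · have hx := commutatorElement_mem_of_coe_eq_twistedClass hH x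
    rw [hHbot, mem_bot] at hx
    exact commutatorElement_eq_one_iff_mul_comm.1 hx
  · exact fun h => hm1 (congrArg Subtype.val h)

end MinN

namespace Subgroup

variable (G : Type*) [Group G]

def hypercenter : Subgroup G :=
  ⨆ n, upperCentralSeries G n

instance : (hypercenter G).Normal :=
  iSup_normal _

variable {G}

theorem exists_subset_upperCentralSeries_of_finite {S : Set G} (hS : S.Finite)
    (hSJ : S ⊆ hypercenter G) : ∃ c, S ⊆ upperCentralSeries G c := by
  have hmono := upperCentralSeries_mono G
  rw [hypercenter, coe_iSup_of_directed hmono.directed_le] at hSJ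
  have hdir : Directed (· ⊆ ·) fun n => (upperCentralSeries G n : Set G) := hmono.directed_le
  simpa using hdir.exists_mem_subset_of_finset_subset_biUnion (s := hS.toFinset)
    (by simpa using hSJ)

theorem mem_upperCentralSeries_succ_of_closure_eq_top {S : Set G} (hS : closure S = ⊤)
    {n : ℕ} {m : G} (hm : ∀ s ∈ S, ⁅s, m⁆ ∈ upperCentralSeries G n) :
    m ∈ upperCentralSeries G (n + 1) := by
  set N := upperCentralSeries G n
  set C := (centralizer {(m : G ⧸ N)}).comap (QuotientGroup.mk' N)
  have hcomm (x : G) : ⁅x, m⁆ ∈ N ↔ x ∈ C := by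
    rw [mem_comap, mem_centralizer_singleton_iff, ← QuotientGroup.eq_one_iff,
      ← QuotientGroup.mk'_apply, map_commutatorElement, commutatorElement_eq_one_iff_mul_comm]
    rfl
  have hall : closure S ≤ C :=
    (closure_le _).2 fun s hs => (hcomm s).1 (hm s hs)
  rw [hS] at hall
  refine mem_upperCentralSeries_succ_iff.2 fun y => ?_
  rw [← commutatorElement_inv]
  exact inv_mem ((hcomm y).2 (hall (mem_top y)))

theorem mem_hypercenter_of_closure_eq_top {S : Set G} (hS : closure S = ⊤) (hSfin : S.Finite)
    {m : G} (hm : ∀ s ∈ S, ⁅s, m⁆ ∈ hypercenter G) : m ∈ hypercenter G := by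
  obtain ⟨c, hc⟩ := exists_subset_upperCentralSeries_of_finite (hSfin.image fun s => ⁅s, m⁆)
    (Set.image_subset_iff.2 hm)
  exact le_iSup (upperCentralSeries G) (c + 1)
    (mem_upperCentralSeries_succ_of_closure_eq_top hS fun s hs => hc ⟨s, hs, rfl⟩)

theorem center_quotient_hypercenter_eq_bot (hG : Group.FG G) :
    center (G ⧸ hypercenter G) = ⊥ := by
  obtain ⟨S, hS, hSfin⟩ := Group.fg_iff.1 hG
  refine (eq_bot_iff_forall _).2 fun q hq => ?_
  obtain ⟨m, rfl⟩ := QuotientGroup.mk'_surjective (hypercenter G) q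
  refine (QuotientGroup.eq_one_iff m).2 (mem_hypercenter_of_closure_eq_top hS hSfin fun s _ => ?_)
  rw [← QuotientGroup.eq_one_iff, ← QuotientGroup.mk'_apply, map_commutatorElement,
    commutatorElement_eq_one_iff_mul_comm]
  exact mem_center_iff.1 hq _

theorem _root_.Group.isNilpotent_of_hypercenter_eq_top (hG : Group.FG G)
    (htop : hypercenter G = ⊤) : Group.IsNilpotent G := by
  obtain ⟨S, hS, hSfin⟩ := Group.fg_iff.1 hG
  obtain ⟨c, hc⟩ :=
    exists_subset_upperCentralSeries_of_finite hSfin (htop ▸ Set.subset_univ S)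
  exact ⟨c, eq_top_iff.2 (hS ▸ (closure_le _).2 hc)⟩

end Subgroup

theorem stmt_15 {G : Type*} [Group G] (hfg : Group.FG G)
    (h : ∀ g : G, ∃ H : Subgroup G, (H : Set G) = twistedClass g)
    (hmin : ¬∃ f : ℕ → Subgroup G, (∀ i, (f i).Normal) ∧ ∀ i, f (i + 1) < f i) :
    Group.IsNilpotent G := by
  refine Group.isNilpotent_of_hypercenter_eq_top hfg (by_contra fun hne => ?_)
  have : Nontrivial (G ⧸ hypercenter G) := QuotientGroup.nontrivial_iff.2 hne
  have hsurj := QuotientGroup.mk'_surjective (hypercenter G)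
  exact ((minN_of_not_exists_strictAnti hmin).of_surjective hsurj).center_ne_bot
    (exists_subgroup_coe_eq_twistedClass_of_surjective hsurj h)
    (center_quotient_hypercenter_eq_bot hfg)
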